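/- arXiv:1702.07441 — 2 statements merged into one kernel-verified Lean document; each statement's English description precedes it below -/
import Mathlib

section
/- Let P and P_ε be Markov kernels on X with π stationary for P, P acting on L²(π) through T_P and L²(π)-geometrically ergodic with rate 1−α, P_ε acting on L²(π) through T_ε, ‖T_P − T_ε‖ ≤ ε, and 0 < ε < α. Suppose P_ε has a stationary probability measure π_ε with π_ε ≪ π and dπ_ε/dπ ∈ L²(π). Then 1 ≤ ‖π_ε‖₂ ≤ α/√(α² − ε²) and 0 ≤ ‖π − π_ε‖₂ ≤ ε/√(α² − ε²). -/
open MeasureTheory ProbabilityTheory Filter ENNReal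

variable {X : Type*} [MeasurableSpace X]

/-- The real-valued Radon–Nikodym density of `μ` with respect to `π`. -/
noncomputable def rnd (π μ : Measure X) (x : X) : ℝ := (μ.rnDeriv π x).toReal

/-- `n`-fold action of the kernel `P` on the measure `μ`, i.e. `μPⁿ`. -/
noncomputable def mIter (P : Kernel X X) (n : ℕ) (μ : Measure X) : Measure X :=
  (fun ν => ν.bind (fun x => P x))^[n] μ

/-- `n`-fold composition of the kernel `P`, i.e. `Pⁿ`. -/
noncomputable def kpow (P : Kernel X X) : ℕ → Kernel X X
  | 0 => Kernel.id
  | n + 1 => (kpow P n).comp P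

/-- `‖μ − ν‖₂`, the `L²(π)` distance between the `π`-densities of `μ` and `ν`. -/
noncomputable def d2 (π μ ν : Measure X) : ℝ :=
  (eLpNorm (fun x => rnd π μ x - rnd π ν x) 2 π).toReal

/-- `‖μ − ν‖₁`, the `L¹(π)` distance between the `π`-densities of `μ` and `ν`. -/
noncomputable def d1 (π μ ν : Measure X) : ℝ := ∫ x, |rnd π μ x - rnd π ν x| ∂π

/-- `P` acts on `L²(π)` through the bounded linear operator `T`:
for every probability measure `μ ≪ π` with `dμ/dπ ∈ L²(π)`,
`T(dμ/dπ)` is a version of `d(μP)/dπ`. -/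
def ActsOn (π : Measure X) (P : Kernel X X) (T : Lp ℝ 2 π →L[ℝ] Lp ℝ 2 π) : Prop :=
  ∀ μ : Measure X, IsProbabilityMeasure μ → μ ≪ π →
    ∀ h : MemLp (rnd π μ) 2 π,
      ⇑(T (h.toLp (rnd π μ))) =ᵐ[π] rnd π (μ.bind (fun x => P x))

/-- `L²(π)`-geometric ergodicity with rate `1 − α`:
`T` contracts mean-zero functions by the factor `1 − α`. -/
def IsGeomErg (π : Measure X) (T : Lp ℝ 2 π →L[ℝ] Lp ℝ 2 π) (α : ℝ) : Prop :=
  ∀ f : Lp ℝ 2 π, ∫ x, f x ∂π = 0 → ‖T f‖ ≤ (1 - α) * ‖f‖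

/-- Reversibility of `P` with respect to `π`. -/
def Reversible (π : Measure X) (P : Kernel X X) : Prop :=
  ∀ A B : Set X, MeasurableSet A → MeasurableSet B →
    ∫⁻ x in A, P x B ∂π = ∫⁻ x in B, P x A ∂π

/-- `∫ h dPᵏ(x,·)`, the `k`-step forward operator applied to `h`. -/
noncomputable def kInt (P : Kernel X X) (k : ℕ) (h : X → ℝ) (x : X) : ℝ :=
  ∫ y, h y ∂(kpow P k x)

/-- `μPᵏh = ∫∫ h(y) Pᵏ(x,dy) μ(dx)`. -/
noncomputable def mkInt (P : Kernel X X) (μ : Measure X) (k : ℕ) (h : X → ℝ) : ℝ :=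
  ∫ x, kInt P k h x ∂μ

/-- Path covariance `Cov_μ(f(X_t), g(X_{t+s}))` of the chain with kernel `P` started at `μ`. -/
noncomputable def covPath (P : Kernel X X) (μ : Measure X) (t s : ℕ) (f g : X → ℝ) : ℝ :=
  ∫ x, (∫ y, (∫ z, (f y - mkInt P μ t f) * (g z - mkInt P μ (t + s) g)
    ∂(kpow P s y)) ∂(kpow P t x)) ∂μ

/-- Path covariance `Cov_μ(f(X_m), g(X_n))` of the chain with kernel `P` started at `μ`. -/
noncomputable def covPath2 (P : Kernel X X) (μ : Measure X) (m n : ℕ) (f g : X → ℝ) : ℝ :=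
  ∫ x, (∫ y, (∫ z, (f y - mkInt P μ (min m n) f) * (g z - mkInt P μ (max m n) g)
    ∂(kpow P (max m n - min m n) y)) ∂(kpow P (min m n) x)) ∂μ

/-!
Let `e` and `F` be the densities of `π` and `π_ε` in `L²(π)`. Then `T e = e`, `T_ε F = F`, and
`F - e` has mean zero, i.e. is orthogonal to `e`, so `‖F‖² = 1 + ‖F - e‖²`. Writing
`F - e = (T_ε - T) F + T (F - e)` and contracting the mean-zero part gives
`α ‖F - e‖ ≤ ε ‖F‖`; squaring and inserting Pythagoras, `α² ‖F - e‖² ≤ ε² (1 + ‖F - e‖²)`,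
which is equivalent to both upper bounds.
-/

section Perturbation

open Function

lemma le_div_sqrt_of_sq_mul_le {x c d : ℝ} (hx : 0 ≤ x) (hc : 0 ≤ c) (hd : 0 < d)
    (h : x ^ 2 * d ≤ c ^ 2) : x ≤ c / √d := by
  rw [le_div_iff₀ (Real.sqrt_pos.2 hd)]
  refine (pow_le_pow_iff_left₀ (by positivity) hc two_ne_zero).1 ?_
  rwa [mul_pow, Real.sq_sqrt hd.le]

variable {E : Type*}

lemma mul_norm_sub_le_of_isFixedPt [NormedAddCommGroup E] [NormedSpace ℝ E]
    {T Te : E →L[ℝ] E} {e F : E} {α ε : ℝ} (he : IsFixedPt T e) (hF : IsFixedPt Te F)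
    (hcontr : ‖T (F - e)‖ ≤ (1 - α) * ‖F - e‖) (hdiff : ‖T - Te‖ ≤ ε) :
    α * ‖F - e‖ ≤ ε * ‖F‖ := by
  have hsplit : F - e = (Te - T) F + T (F - e) := by
    rw [sub_apply, map_sub, hF.eq, he.eq]
    abel
  have hpert : ‖(Te - T) F‖ ≤ ε * ‖F‖ :=
    ((Te - T).le_opNorm F).trans
      (mul_le_mul_of_nonneg_right (norm_sub_rev T Te ▸ hdiff) (norm_nonneg F))
  have htri := norm_add_le ((Te - T) F) (T (F - e))
  rw [← hsplit] at htri
  linarith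

theorem norm_bounds_of_isFixedPt_perturbation [NormedAddCommGroup E] [InnerProductSpace ℝ E]
    {T Te : E →L[ℝ] E} {e F : E} {α ε : ℝ} (hnorm : ‖e‖ = 1) (hinner : inner ℝ e F = 1)
    (he : IsFixedPt T e) (hF : IsFixedPt Te F)
    (hcontr : ∀ f, inner ℝ e f = 0 → ‖T f‖ ≤ (1 - α) * ‖f‖) (hdiff : ‖T - Te‖ ≤ ε)
    (hεα : ε < α) :
    1 ≤ ‖F‖ ∧ ‖F‖ ≤ α / √(α ^ 2 - ε ^ 2) ∧ ‖F - e‖ ≤ ε / √(α ^ 2 - ε ^ 2) := by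
  have hε : 0 ≤ ε := (norm_nonneg _).trans hdiff
  have horth : inner ℝ e (F - e) = 0 := by
    rw [inner_sub_right, hinner, real_inner_self_eq_norm_sq, hnorm]
    norm_num
  have hpyth : ‖F‖ ^ 2 = 1 + ‖F - e‖ ^ 2 := by
    have := norm_add_sq_eq_norm_sq_add_norm_sq_real horth
    rw [add_sub_cancel, hnorm] at this
    nlinarith
  have hkey := mul_norm_sub_le_of_isFixedPt he hF (hcontr _ horth) hdiff
  have hsq : α ^ 2 * ‖F - e‖ ^ 2 ≤ ε ^ 2 * (1 + ‖F - e‖ ^ 2) := by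
    rw [← hpyth, ← mul_pow, ← mul_pow]
    exact pow_le_pow_left₀ (by nlinarith [norm_nonneg (F - e)]) hkey 2
  have hd : 0 < α ^ 2 - ε ^ 2 := by nlinarith
  refine ⟨?_, ?_, ?_⟩
  · nlinarith [norm_nonneg F, sq_nonneg ‖F - e‖]
  · exact le_div_sqrt_of_sq_mul_le (norm_nonneg F) (by linarith) hd (by rw [hpyth]; nlinarith)
  · exact le_div_sqrt_of_sq_mul_le (norm_nonneg _) hε hd (by nlinarith)

end Perturbation

section Densities

variable (π : Measure X)

lemma rnd_self_ae_eq_one [SigmaFinite π] : rnd π π =ᵐ[π] 1 := by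
  filter_upwards [Measure.rnDeriv_self π] with x hx
  simp [rnd, hx]

lemma memLp_rnd_self [IsFiniteMeasure π] (p : ℝ≥0∞) : MemLp (rnd π π) p π :=
  (memLp_const 1).ae_eq (rnd_self_ae_eq_one π).symm

lemma inner_toLp_rnd_self [IsFiniteMeasure π] (f : Lp ℝ 2 π) :
    inner ℝ ((memLp_rnd_self π 2).toLp (rnd π π)) f = ∫ x, f x ∂π := by
  rw [L2.inner_def]
  refine integral_congr_ae ?_
  filter_upwards [(memLp_rnd_self π 2).coeFn_toLp, rnd_self_ae_eq_one π] with x h1 h2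
  simp [h1, h2]

lemma norm_toLp_rnd_self [IsProbabilityMeasure π] :
    ‖(memLp_rnd_self π 2).toLp (rnd π π)‖ = 1 := by
  rw [Lp.norm_toLp, eLpNorm_congr_ae (rnd_self_ae_eq_one π), Pi.one_def,
    eLpNorm_const' _ two_ne_zero ofNat_ne_top]
  simp

lemma integral_toLp_rnd [SigmaFinite π] {μ : Measure X} [IsProbabilityMeasure μ] (hμ : μ ≪ π)
    (h : MemLp (rnd π μ) 2 π) : ∫ x, h.toLp (rnd π μ) x ∂π = 1 := by
  rw [integral_congr_ae h.coeFn_toLp]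
  simpa [rnd] using Measure.integral_toReal_rnDeriv hμ

lemma d2_eq_norm_toLp_sub {μ ν : Measure X} (hμ : MemLp (rnd π μ) 2 π)
    (hν : MemLp (rnd π ν) 2 π) : d2 π μ ν = ‖hμ.toLp (rnd π μ) - hν.toLp (rnd π ν)‖ := by
  rw [← MemLp.toLp_sub, Lp.norm_toLp]
  rfl

end Densities

lemma ActsOn.isFixedPt_toLp_rnd {π : Measure X} {P : Kernel X X} {T : Lp ℝ 2 π →L[ℝ] Lp ℝ 2 π}
    (hP : ActsOn π P T) {μ : Measure X} [IsProbabilityMeasure μ] (hμ : μ ≪ π)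
    (h : MemLp (rnd π μ) 2 π) (hstat : μ.bind (fun x => P x) = μ) :
    Function.IsFixedPt T (h.toLp (rnd π μ)) := by
  have hT := hP μ inferInstance hμ h
  rw [hstat] at hT
  exact Lp.ext (hT.trans h.coeFn_toLp.symm)

theorem stmt4_general (π : Measure X) [IsProbabilityMeasure π] (P Pe : Kernel X X)
    (hstat : π.bind (fun x => P x) = π)
    (α ε : ℝ) (hεα : ε < α)
    (T Te : Lp ℝ 2 π →L[ℝ] Lp ℝ 2 π) (hT : ActsOn π P T) (hTe : ActsOn π Pe Te)
    (hge : IsGeomErg π T α) (hdiff : ‖T - Te‖ ≤ ε)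
    (πe : Measure X) [IsProbabilityMeasure πe] (hstate : πe.bind (fun x => Pe x) = πe)
    (hac1 : πe ≪ π) (hπe : MemLp (rnd π πe) 2 π) :
    (1 ≤ (eLpNorm (rnd π πe) 2 π).toReal ∧
      (eLpNorm (rnd π πe) 2 π).toReal ≤ α / Real.sqrt (α ^ 2 - ε ^ 2)) ∧
    (0 ≤ d2 π π πe ∧ d2 π π πe ≤ ε / Real.sqrt (α ^ 2 - ε ^ 2)) := by
  obtain ⟨hF1, hFα, hFe⟩ := norm_bounds_of_isFixedPt_perturbation (norm_toLp_rnd_self π)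
    (by rw [inner_toLp_rnd_self, integral_toLp_rnd π hac1])
    (hT.isFixedPt_toLp_rnd Measure.AbsolutelyContinuous.rfl (memLp_rnd_self π 2) hstat)
    (hTe.isFixedPt_toLp_rnd hac1 hπe hstate)
    (fun f hf => hge f (by rwa [inner_toLp_rnd_self] at hf)) hdiff hεα
  rw [← Lp.norm_toLp _ hπe, d2_eq_norm_toLp_sub π (memLp_rnd_self π 2) hπe, norm_sub_rev]
  exact ⟨⟨hF1, hFα⟩, ENNReal.toReal_nonneg, hFe⟩

/-- If `ε < α` and `dπ_ε/dπ ∈ L²(π)`, then `1 ≤ ‖π_ε‖₂ ≤ α/√(α²−ε²)` and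
`0 ≤ ‖π − π_ε‖₂ ≤ ε/√(α²−ε²)`. -/
theorem stmt4 (π : Measure X) [IsProbabilityMeasure π] (P Pe : Kernel X X)
    [IsMarkovKernel P] [IsMarkovKernel Pe]
    (hstat : π.bind (fun x => P x) = π)
    (α ε : ℝ) (hα0 : 0 < α) (hα1 : α < 1) (hε0 : 0 < ε) (hεα : ε < α)
    (T Te : Lp ℝ 2 π →L[ℝ] Lp ℝ 2 π) (hT : ActsOn π P T) (hTe : ActsOn π Pe Te)
    (hge : IsGeomErg π T α) (hdiff : ‖T - Te‖ ≤ ε)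
    (πe : Measure X) [IsProbabilityMeasure πe] (hstate : πe.bind (fun x => Pe x) = πe)
    (hac1 : πe ≪ π) (hπe : MemLp (rnd π πe) 2 π) :
    (1 ≤ (eLpNorm (rnd π πe) 2 π).toReal ∧
      (eLpNorm (rnd π πe) 2 π).toReal ≤ α / Real.sqrt (α ^ 2 - ε ^ 2)) ∧
    (0 ≤ d2 π π πe ∧ d2 π π πe ≤ ε / Real.sqrt (α ^ 2 - ε ^ 2)) :=
  stmt4_general π P Pe hstat α ε hεα T Te hT hTe hge hdiff πe hstate hac1 hπe
end

section
/- Let P and P_ε be Markov kernels on X with π stationary for P, P acting on L²(π) through T_P and L²(π)-geometrically ergodic with rate 1−α, P_ε acting on L²(π) through T_ε, ‖T_P − T_ε‖ ≤ ε, and 0 < ε < α. Suppose P_ε has a stationary probability measure π_ε with π_ε ≪ π and π ≪ π_ε, and that πP_εⁿ → π_ε in total variation. Then: (i) dπ_ε/dπ ∈ L²(π) with 1 ≤ ‖π_ε‖₂ ≤ α/√(α² − ε²); (ii) ‖π − π_ε‖₂ ≤ ε/√(α² − ε²); and (iii) for every probability measure μ ≪ π with dμ/dπ ∈ L²(π)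 and every n ∈ ℕ, ‖μP_εⁿ − π_ε‖₂ ≤ (1−(α−ε))ⁿ ‖μ − π_ε‖₂. -/
open MeasureTheory ProbabilityTheory Filter ENNReal

variable {X : Type*} [MeasurableSpace X]

/-!
Since `‖T_P - T_ε‖ ≤ ε`, the operator `T_ε` contracts mean-zero functions by `1 - (α - ε)`.
Differences of densities of probability measures have mean zero, so the densities of `πP_εⁿ`
form a Cauchy sequence in `L²(π)`; by total-variation convergence its limit is `dπ_ε/dπ`, and
the same contraction applied to `μP_εⁿ - π_ε` gives the geometric ergodicity of `P_ε`.
Writing `dπ_ε/dπ = 1 + D` with `D ⊥ 1`, the fixed-point equations `T_P 1 = 1` and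
`T_ε (1 + D) = 1 + D` give `D = (T_ε - T_P)(1 + D) + T_P D`, hence
`α ‖D‖ ≤ ε ‖1 + D‖ = ε √(1 + ‖D‖²)`, which rearranges to the bounds on `‖π_ε‖₂` and `‖π - π_ε‖₂`.
-/

open Topology

namespace MeasureTheory.Measure

variable {α : Type*} [MeasurableSpace α]

lemma real_le_real_add_real_sub_univ (μ ν : Measure α) [IsFiniteMeasure μ] [IsFiniteMeasure ν]
    (s : Set α) : μ.real s ≤ ν.real s + (μ - ν).real Set.univ := by
  have h : μ s ≤ ν s + (μ - ν) Set.univ :=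
    calc μ s ≤ (μ - ν + ν) s := sub_le_iff_le_add.mp le_rfl s
      _ = (μ - ν) s + ν s := rfl
      _ ≤ ν s + (μ - ν) Set.univ := by rw [add_comm]; gcongr; exact Set.subset_univ s
  simpa [measureReal_def, ENNReal.toReal_add] using ENNReal.toReal_mono (by finiteness) h

lemma tendsto_measureReal_of_tendsto_tv {μ : ℕ → Measure α} {ν : Measure α}
    [∀ n, IsFiniteMeasure (μ n)] [IsFiniteMeasure ν]
    (h : Tendsto (fun n => (μ n - ν) Set.univ + (ν - μ n) Set.univ) atTop (𝓝 0)) (s : Set α) :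
    Tendsto (fun n => (μ n).real s) atTop (𝓝 (ν.real s)) := by
  have h' : Tendsto (fun n => (μ n - ν).real Set.univ + (ν - μ n).real Set.univ) atTop (𝓝 0) := by
    simpa [Function.comp_def, measureReal_def, ENNReal.toReal_add] using
      (ENNReal.tendsto_toReal ENNReal.zero_ne_top).comp h
  refine tendsto_iff_dist_tendsto_zero.mpr (squeeze_zero (fun _ => dist_nonneg) (fun n => ?_) h')
  rw [Real.dist_eq, abs_sub_le_iff]
  constructor <;> linarith [real_le_real_add_real_sub_univ (μ n) ν s,
    real_le_real_add_real_sub_univ ν (μ n) s, measureReal_nonneg (μ := μ n - ν) (s := Set.univ),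
    measureReal_nonneg (μ := ν - μ n) (s := Set.univ)]

end MeasureTheory.Measure

section Iterates

variable {P : Kernel X X} {μ : Measure X}

lemma mIter_succ (P : Kernel X X) (n : ℕ) (μ : Measure X) :
    mIter P (n + 1) μ = P ∘ₘ mIter P n μ :=
  Function.iterate_succ_apply' _ _ _

instance [IsMarkovKernel P] [IsProbabilityMeasure μ] (n : ℕ) :
    IsProbabilityMeasure (mIter P n μ) := by
  induction n with
  | zero => assumption
  | succ n _ => rw [mIter_succ]; infer_instance

lemma mIter_eq_self (h : P ∘ₘ μ = μ) (n : ℕ) : mIter P n μ = μ :=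
  Function.iterate_fixed h n

end Iterates

structure HasL2Density (π μ : Measure X) : Prop where
  absolutelyContinuous : μ ≪ π
  memLp : MemLp (rnd π μ) 2 π

open Classical in
/-- `dμ/dπ` in `L²(π)`, with junk value `0` when `dμ/dπ ∉ L²(π)`. -/
noncomputable def rndLp (π μ : Measure X) : Lp ℝ 2 π :=
  if h : MemLp (rnd π μ) 2 π then h.toLp _ else 0

section Densities

variable {π μ ν : Measure X}

lemma coeFn_rndLp (h : MemLp (rnd π μ) 2 π) : rndLp π μ =ᵐ[π] rnd π μ := by
  rw [rndLp, dif_pos h]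
  exact h.coeFn_toLp

lemma norm_rndLp (h : MemLp (rnd π μ) 2 π) : ‖rndLp π μ‖ = (eLpNorm (rnd π μ) 2 π).toReal := by
  rw [rndLp, dif_pos h, Lp.norm_toLp]

lemma norm_rndLp_sub_rndLp (hμ : HasL2Density π μ) (hν : HasL2Density π ν) :
    ‖rndLp π μ - rndLp π ν‖ = d2 π μ ν := by
  rw [Lp.norm_def, d2]
  congr 1
  apply eLpNorm_congr_ae
  filter_upwards [Lp.coeFn_sub (rndLp π μ) (rndLp π ν), coeFn_rndLp hμ.memLp,
    coeFn_rndLp hν.memLp] with x hsub hμx hνx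
  rw [hsub, Pi.sub_apply, hμx, hνx]

variable [IsFiniteMeasure π]

lemma setIntegral_rndLp [IsFiniteMeasure μ] (h : HasL2Density π μ) (s : Set X) :
    ∫ x in s, rndLp π μ x ∂π = μ.real s :=
  (integral_congr_ae (ae_restrict_of_ae (coeFn_rndLp h.memLp))).trans
    (Measure.setIntegral_toReal_rnDeriv h.absolutelyContinuous s)

lemma integral_rndLp_sub_rndLp [IsProbabilityMeasure μ] [IsProbabilityMeasure ν]
    (hμ : HasL2Density π μ) (hν : HasL2Density π ν) :
    ∫ x, (rndLp π μ - rndLp π ν) x ∂π = 0 := by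
  have hint (f : Lp ℝ 2 π) : Integrable f π := (Lp.memLp f).integrable one_le_two
  rw [integral_congr_ae (Lp.coeFn_sub _ _), integral_sub' (hint _) (hint _),
    ← setIntegral_univ, setIntegral_rndLp hμ, ← setIntegral_univ, setIntegral_rndLp hν]
  simp

lemma hasL2Density_self : HasL2Density π π := by
  refine ⟨Measure.AbsolutelyContinuous.rfl, (memLp_const (1 : ℝ)).ae_eq ?_⟩
  filter_upwards [Measure.rnDeriv_self π] with x hx
  simp [rnd, hx]

lemma inner_rndLp_self (f : Lp ℝ 2 π) : inner ℝ (rndLp π π) f = ∫ x, f x ∂π := by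
  have h1 : rndLp π π = indicatorConstLp 2 MeasurableSet.univ (measure_ne_top π _) (1 : ℝ) := by
    refine Lp.ext ((coeFn_rndLp hasL2Density_self.memLp).trans ?_)
    filter_upwards [Measure.rnDeriv_self π, indicatorConstLp_coeFn (p := 2) (c := (1 : ℝ))
      (hs := MeasurableSet.univ) (hμs := measure_ne_top π _)] with x hx hind
    rw [hind]
    simp [rnd, hx]
  rw [h1, L2.inner_indicatorConstLp_one, setIntegral_univ]

lemma norm_rndLp_self [IsProbabilityMeasure π] : ‖rndLp π π‖ = 1 := by
  have h : ‖rndLp π π‖ ^ 2 = 1 := by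
    rw [← real_inner_self_eq_norm_sq, inner_rndLp_self, ← setIntegral_univ,
      setIntegral_rndLp hasL2Density_self]
    simp
  exact (pow_eq_one_iff_of_nonneg (norm_nonneg _) two_ne_zero).mp h

end Densities

section Operators

variable {π : Measure X} {P : Kernel X X} {T T' : Lp ℝ 2 π →L[ℝ] Lp ℝ 2 π} {μ ν : Measure X}
  {α ε : ℝ}

lemma ActsOn.memLp_comp (hT : ActsOn π P T) [IsProbabilityMeasure μ] (h : HasL2Density π μ) :
    MemLp (rnd π (P ∘ₘ μ)) 2 π :=
  (Lp.memLp _).ae_eq (hT μ ‹_› h.absolutelyContinuous h.memLp)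

lemma ActsOn.apply_rndLp (hT : ActsOn π P T) [IsProbabilityMeasure μ] (h : HasL2Density π μ) :
    T (rndLp π μ) = rndLp π (P ∘ₘ μ) := by
  rw [rndLp, dif_pos h.memLp]
  exact Lp.ext ((hT μ ‹_› h.absolutelyContinuous h.memLp).trans
    (coeFn_rndLp (hT.memLp_comp h)).symm)

lemma ActsOn.hasL2Density_mIter (hT : ActsOn π P T) (hP : ∀ ν : Measure X, ν ≪ π → P ∘ₘ ν ≪ π)
    [IsMarkovKernel P] [IsProbabilityMeasure μ] (h : HasL2Density π μ) (n : ℕ) :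
    HasL2Density π (mIter P n μ) := by
  induction n with
  | zero => exact h
  | succ n ih =>
    rw [mIter_succ]
    exact ⟨hP _ ih.absolutelyContinuous, hT.memLp_comp ih⟩

lemma IsGeomErg.of_norm_sub_le (hge : IsGeomErg π T α) (hdiff : ‖T - T'‖ ≤ ε) :
    IsGeomErg π T' (α - ε) := by
  intro f hf
  calc ‖T' f‖ = ‖T f - (T - T') f‖ := by simp
    _ ≤ ‖T f‖ + ‖(T - T') f‖ := norm_sub_le _ _
    _ ≤ (1 - α) * ‖f‖ + ε * ‖f‖ := by
      gcongr
      · exact hge f hf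
      · exact (T - T').le_of_opNorm_le hdiff f
    _ = (1 - (α - ε)) * ‖f‖ := by ring

lemma IsGeomErg.norm_rndLp_mIter_sub_le [IsFiniteMeasure π] [IsMarkovKernel P]
    [IsProbabilityMeasure μ] [IsProbabilityMeasure ν] (hge : IsGeomErg π T α) (hα : α ≤ 1)
    (hT : ActsOn π P T) (hP : ∀ ν : Measure X, ν ≪ π → P ∘ₘ ν ≪ π)
    (hμ : HasL2Density π μ) (hν : HasL2Density π ν) (n : ℕ) :
    ‖rndLp π (mIter P n μ) - rndLp π (mIter P n ν)‖ ≤ (1 - α) ^ n * ‖rndLp π μ - rndLp π ν‖ := by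
  induction n with
  | zero => simp [mIter]
  | succ n ih =>
    have hμn := hT.hasL2Density_mIter hP hμ n
    have hνn := hT.hasL2Density_mIter hP hν n
    rw [mIter_succ, mIter_succ, ← hT.apply_rndLp hμn, ← hT.apply_rndLp hνn, ← map_sub]
    calc _ ≤ (1 - α) * ‖rndLp π (mIter P n μ) - rndLp π (mIter P n ν)‖ :=
          hge _ (integral_rndLp_sub_rndLp hμn hνn)
      _ ≤ (1 - α) * ((1 - α) ^ n * ‖rndLp π μ - rndLp π ν‖) := by gcongr
      _ = (1 - α) ^ (n + 1) * ‖rndLp π μ - rndLp π ν‖ := by ring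

lemma IsGeomErg.exists_tendsto_rndLp_mIter [IsProbabilityMeasure π] [IsMarkovKernel P]
    (hge : IsGeomErg π T α) (hα0 : 0 < α) (hα1 : α ≤ 1) (hT : ActsOn π P T)
    (hP : ∀ ν : Measure X, ν ≪ π → P ∘ₘ ν ≪ π) :
    ∃ G : Lp ℝ 2 π, Tendsto (fun n => rndLp π (mIter P n π)) atTop (𝓝 G) := by
  have hπ1 := hT.hasL2Density_mIter hP hasL2Density_self 1
  -- `πPⁿ⁺¹ = (πP)Pⁿ`: consecutive terms are the orbits of `π` and `πP`.
  refine cauchySeq_tendsto_of_complete (cauchySeq_of_le_geometric (1 - α)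
    ‖rndLp π π - rndLp π (mIter P 1 π)‖ (by linarith) fun n => ?_)
  rw [dist_eq_norm, mul_comm, mIter, mIter, Function.iterate_add_apply]
  exact hge.norm_rndLp_mIter_sub_le hα1 hT hP hasL2Density_self hπ1 n

lemma IsGeomErg.memLp_rnd_of_tendsto_tv [IsProbabilityMeasure π] [IsMarkovKernel P]
    [IsProbabilityMeasure ν] (hge : IsGeomErg π T α) (hα0 : 0 < α) (hα1 : α ≤ 1)
    (hT : ActsOn π P T) (hP : ∀ ν : Measure X, ν ≪ π → P ∘ₘ ν ≪ π) (hν : ν ≪ π)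
    (htv : Tendsto (fun n => (mIter P n π - ν) Set.univ + (ν - mIter P n π) Set.univ)
      atTop (𝓝 0)) :
    MemLp (rnd π ν) 2 π := by
  obtain ⟨G, hG⟩ := hge.exists_tendsto_rndLp_mIter hα0 hα1 hT hP
  refine (Lp.memLp G).ae_eq (ae_eq_of_forall_setIntegral_eq_of_sigmaFinite
    (fun s _ _ => ((Lp.memLp G).integrable one_le_two).integrableOn)
    (fun s _ _ => Measure.integrable_toReal_rnDeriv.integrableOn) fun s hs _ => ?_)
  have hGs : Tendsto (fun n => (mIter P n π).real s) atTop (𝓝 (∫ x in s, G x ∂π)) := by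
    have := (tendsto_const_nhds (x := indicatorConstLp 2 hs (measure_ne_top π s) (1 : ℝ))).inner
      (𝕜 := ℝ) hG
    simp only [L2.inner_indicatorConstLp_one] at this
    refine this.congr fun n => ?_
    exact setIntegral_rndLp (hT.hasL2Density_mIter hP hasL2Density_self n) s
  rw [tendsto_nhds_unique hGs (Measure.tendsto_measureReal_of_tendsto_tv htv s)]
  exact (Measure.setIntegral_toReal_rnDeriv hν s).symm

end Operators

lemma le_div_sqrt_sq_sub_sq {α ε d s : ℝ} (hε : 0 ≤ ε) (hεα : ε < α) (hd : 0 ≤ d) (hs : 0 ≤ s)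
    (hsd : s ^ 2 = 1 + d ^ 2) (h : α * d ≤ ε * s) :
    d ≤ ε / √(α ^ 2 - ε ^ 2) ∧ s ≤ α / √(α ^ 2 - ε ^ 2) := by
  have hq2 : √(α ^ 2 - ε ^ 2) ^ 2 = α ^ 2 - ε ^ 2 := Real.sq_sqrt (by nlinarith)
  have hq : 0 < √(α ^ 2 - ε ^ 2) := Real.sqrt_pos.mpr (by nlinarith)
  have hsq : α ^ 2 * d ^ 2 ≤ ε ^ 2 * s ^ 2 := by
    nlinarith [mul_nonneg (hε.trans hεα.le) hd]
  rw [le_div_iff₀ hq, le_div_iff₀ hq]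
  constructor
  · refine (pow_le_pow_iff_left₀ (by positivity) hε two_ne_zero).mp ?_
    nlinarith
  · refine (pow_le_pow_iff_left₀ (by positivity) (hε.trans hεα.le) two_ne_zero).mp ?_
    nlinarith

lemma norm_le_and_norm_sub_le_of_isFixedPt {E : Type*} [NormedAddCommGroup E]
    [InnerProductSpace ℝ E] {T T' : E →L[ℝ] E} {u v : E} {α ε : ℝ} (hu : T u = u)
    (hv : T' v = v) (hu1 : ‖u‖ = 1)
    (horth : inner ℝ u (v - u) = 0) (hcontr : ‖T (v - u)‖ ≤ (1 - α) * ‖v - u‖)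
    (hdiff : ‖T - T'‖ ≤ ε) (hεα : ε < α) :
    1 ≤ ‖v‖ ∧ ‖v‖ ≤ α / √(α ^ 2 - ε ^ 2) ∧ ‖v - u‖ ≤ ε / √(α ^ 2 - ε ^ 2) := by
  have hpyth : ‖v‖ ^ 2 = 1 + ‖v - u‖ ^ 2 := by
    have := norm_add_sq_eq_norm_sq_add_norm_sq_real horth
    rw [add_sub_cancel, hu1] at this
    nlinarith
  have hsplit : v - u = (T' - T) v + T (v - u) := by
    rw [sub_apply, hv, map_sub, hu]
    abel
  have hbound : α * ‖v - u‖ ≤ ε * ‖v‖ := by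
    have h1 : ‖(T' - T) v‖ ≤ ε * ‖v‖ := (T' - T).le_of_opNorm_le (by rwa [norm_sub_rev]) v
    have h2 : ‖v - u‖ ≤ ‖(T' - T) v‖ + ‖T (v - u)‖ :=
      (congrArg norm hsplit).trans_le (norm_add_le _ _)
    linarith
  obtain ⟨hd, hs⟩ := le_div_sqrt_sq_sub_sq ((norm_nonneg _).trans hdiff) hεα (norm_nonneg _)
    (norm_nonneg _) hpyth hbound
  refine ⟨?_, hs, hd⟩
  nlinarith [norm_nonneg v, sq_nonneg ‖v - u‖]

theorem stmt6_general (π : Measure X) [IsProbabilityMeasure π] (P Pe : Kernel X X)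
    [IsMarkovKernel P] [IsMarkovKernel Pe]
    (hstat : π.bind (fun x => P x) = π)
    (α ε : ℝ) (hα1 : α < 1) (hεα : ε < α)
    (T Te : Lp ℝ 2 π →L[ℝ] Lp ℝ 2 π) (hT : ActsOn π P T) (hTe : ActsOn π Pe Te)
    (hge : IsGeomErg π T α) (hdiff : ‖T - Te‖ ≤ ε)
    (πe : Measure X) [IsProbabilityMeasure πe] (hstate : πe.bind (fun x => Pe x) = πe)
    (hac1 : πe ≪ π) (hac2 : π ≪ πe)
    (htv : Tendsto (fun n => (mIter Pe n π - πe) Set.univ + (πe - mIter Pe n π) Set.univ)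
      atTop (nhds 0)) :
    (MemLp (rnd π πe) 2 π ∧ 1 ≤ (eLpNorm (rnd π πe) 2 π).toReal ∧
      (eLpNorm (rnd π πe) 2 π).toReal ≤ α / Real.sqrt (α ^ 2 - ε ^ 2)) ∧
    d2 π π πe ≤ ε / Real.sqrt (α ^ 2 - ε ^ 2) ∧
    (∀ μ : Measure X, IsProbabilityMeasure μ → μ ≪ π → MemLp (rnd π μ) 2 π →
      ∀ n : ℕ, d2 π (mIter Pe n μ) πe ≤ (1 - (α - ε)) ^ n * d2 π μ πe) := by
  have hε : 0 ≤ ε := (norm_nonneg _).trans hdiff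
  have hP (μ : Measure X) (hμ : μ ≪ π) : Pe ∘ₘ μ ≪ π := by
    have h := (hμ.trans hac2).comp_right Pe
    rw [hstate] at h
    exact h.trans hac1
  have hgeε : IsGeomErg π Te (α - ε) := hge.of_norm_sub_le hdiff
  have hπ : HasL2Density π π := hasL2Density_self
  have hπe : HasL2Density π πe :=
    ⟨hac1, hgeε.memLp_rnd_of_tendsto_tv (by linarith) (by linarith) hTe hP hac1 htv⟩
  have hmean : ∫ x, (rndLp π πe - rndLp π π) x ∂π = 0 := integral_rndLp_sub_rndLp hπe hπ
  obtain ⟨hlow, hup, hdist⟩ := norm_le_and_norm_sub_le_of_isFixedPt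
    (by rw [hT.apply_rndLp hπ, hstat]) (by rw [hTe.apply_rndLp hπe, hstate]) norm_rndLp_self
    ((inner_rndLp_self _).trans hmean) (hge _ hmean) hdiff hεα
  rw [← norm_rndLp hπe.memLp, ← norm_rndLp_sub_rndLp hπ hπe, norm_sub_rev]
  refine ⟨⟨hπe.memLp, hlow, hup⟩, hdist, fun μ _ hμ hμ2 n => ?_⟩
  have hcontr := hgeε.norm_rndLp_mIter_sub_le (by linarith) hTe hP ⟨hμ, hμ2⟩ hπe n
  rwa [mIter_eq_self hstate, norm_rndLp_sub_rndLp (hTe.hasL2Density_mIter hP ⟨hμ, hμ2⟩ n) hπe,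
    norm_rndLp_sub_rndLp ⟨hμ, hμ2⟩ hπe] at hcontr

/-- Combined theorem: if `ε < α`, `π ≪ π_ε ≪ π` and `πP_εⁿ → π_ε` in total variation,
then `dπ_ε/dπ ∈ L²(π)` with `1 ≤ ‖π_ε‖₂ ≤ α/√(α²−ε²)`, `‖π − π_ε‖₂ ≤ ε/√(α²−ε²)`, and
`P_ε` is `L²(π)`-geometrically ergodic with factor `1 − (α − ε)`. -/
theorem stmt6 (π : Measure X) [IsProbabilityMeasure π] (P Pe : Kernel X X)
    [IsMarkovKernel P] [IsMarkovKernel Pe]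
    (hstat : π.bind (fun x => P x) = π)
    (α ε : ℝ) (hα0 : 0 < α) (hα1 : α < 1) (hε0 : 0 < ε) (hεα : ε < α)
    (T Te : Lp ℝ 2 π →L[ℝ] Lp ℝ 2 π) (hT : ActsOn π P T) (hTe : ActsOn π Pe Te)
    (hge : IsGeomErg π T α) (hdiff : ‖T - Te‖ ≤ ε)
    (πe : Measure X) [IsProbabilityMeasure πe] (hstate : πe.bind (fun x => Pe x) = πe)
    (hac1 : πe ≪ π) (hac2 : π ≪ πe)
    (htv : Tendsto (fun n => (mIter Pe n π - πe) Set.univ + (πe - mIter Pe n π) Set.univ)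
      atTop (nhds 0)) :
    (MemLp (rnd π πe) 2 π ∧ 1 ≤ (eLpNorm (rnd π πe) 2 π).toReal ∧
      (eLpNorm (rnd π πe) 2 π).toReal ≤ α / Real.sqrt (α ^ 2 - ε ^ 2)) ∧
    d2 π π πe ≤ ε / Real.sqrt (α ^ 2 - ε ^ 2) ∧
    (∀ μ : Measure X, IsProbabilityMeasure μ → μ ≪ π → MemLp (rnd π μ) 2 π →
      ∀ n : ℕ, d2 π (mIter Pe n μ) πe ≤ (1 - (α - ε)) ^ n * d2 π μ πe) :=
  stmt6_general π P Pe hstat α ε hα1 hεα T Te hT hTe hge hdiff πe hstate hac1 hac2 htv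
end
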